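/- Let τ = (1+√5)/2 ∈ ℂ and let C(x₀,x₁,x₂) = (τ−2)(x₀x₁²+x₁x₂²+x₂x₀²) + (τ−3)x₀x₁x₂ − (x₀²x₁+x₁²x₂+x₂²x₀). If (a,b,c) ∈ ℂ³ satisfies ∂C/∂x₀(a,b,c) = ∂C/∂x₁(a,b,c) = ∂C/∂x₂(a,b,c) = 0, then (a,b,c) = (0,0,0). (Hence the plane cubic curve C = 0 in ℙ² is smooth.) -/
import Mathlib


open MvPolynomial

/-- The golden ratio `τ = (1 + √5)/2`, regarded as a complex number. -/
noncomputable def τ : ℂ := ((1 + Real.sqrt 5) / 2 : ℝ)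

/-- The cubic polynomial
`C = (τ−2)(x₀x₁² + x₁x₂² + x₂x₀²) + (τ−3)x₀x₁x₂ − (x₀²x₁ + x₁²x₂ + x₂²x₀)`,
whose double is the restriction of the Barth sextic to the plane `x₃ = x₀ + x₁ + x₂`. -/
noncomputable def Ccubic : MvPolynomial (Fin 3) ℂ :=
  C (τ - 2) * (X 0 * X 1 ^ 2 + X 1 * X 2 ^ 2 + X 2 * X 0 ^ 2)
    + C (τ - 3) * (X 0 * X 1 * X 2)
    - (X 0 ^ 2 * X 1 + X 1 ^ 2 * X 2 + X 2 ^ 2 * X 0)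

/-- Lemma 3.4: if all three partial derivatives of `C` vanish at a
point `(a, b, c) ∈ ℂ³`, then `(a, b, c) = (0, 0, 0)`.  Hence the plane cubic curve
`C = 0` in `ℙ²` is smooth. -/
theorem cubic_curve_smooth (a b c : ℂ)
    (h : ∀ i : Fin 3, eval ![a, b, c] (pderiv i Ccubic) = 0) :
    (a, b, c) = (0, 0, 0) := by
  have htau : τ ^ 2 - τ - 1 = 0 := by
    have h5 : ((Real.sqrt 5 : ℝ) : ℂ) ^ 2 = 5 := by
      norm_cast
      exact Real.sq_sqrt (by norm_num)
    unfold τ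
    push_cast
    linear_combination (1/4 : ℂ) * h5
  have h0 := h 0
  have h1 := h 1
  have h2 := h 2
  simp [Ccubic, pderiv_mul, pderiv_pow] at h0 h1 h2
  have ha : a ^ 4 = 0 := by
    linear_combination ((-71/40:ℂ)*c^2 + (87/20:ℂ)*b*c + (73/80:ℂ)*b^2 + (-13/48:ℂ)*a*c + (1/6:ℂ)*a*b + (2:ℂ)*a^2 + (99/80:ℂ)*τ*c^2 + (-73/40:ℂ)*τ*b*c + (-61/80:ℂ)*τ*b^2 + (53/48:ℂ)*τ*a*c + (-7/16:ℂ)*τ*a*b + (-1:ℂ)*τ*a^2) * h0 + ((43/80:ℂ)*c^2 + (109/240:ℂ)*b*c + (91/60:ℂ)*b^2 + (27/8:ℂ)*a*c + (-1:ℂ)*a^2 + (-7/10:ℂ)*τ*c^2 + (-53/240:ℂ)*τ*b*c + (-31/80:ℂ)*τ*b^2 + (-9/8:ℂ)*τ*a*c) * h1 + ((-41/240:ℂ)*c^2 + (-403/120:ℂ)*b*c + (-207/80:ℂ)*b^2 + (-17/4:ℂ)*a*c + (-83/240:ℂ)*τ*c^2 + (69/80:ℂ)*τ*b*c + (67/40:ℂ)*τ*b^2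 + (15/8:ℂ)*τ*a*c) * h2 + ((-7/10:ℂ)*c^4 + (13/40:ℂ)*b*c^3 + (3/4:ℂ)*b^2*c^2 + (61/80:ℂ)*b^3*c + (-61/80:ℂ)*b^4 + (13/20:ℂ)*a*c^3 + (-61/80:ℂ)*a*b*c^2 + (-33/40:ℂ)*a*b^2*c + (37/80:ℂ)*a*b^3 + (59/80:ℂ)*a^2*c^2 + (-111/80:ℂ)*a^2*b*c + (27/40:ℂ)*a^2*b^2 + (-1/8:ℂ)*a^3*c) * -htau
  have hb : b ^ 4 = 0 := by
    linear_combination ((-71/40:ℂ)*a^2 + (87/20:ℂ)*c*a + (73/80:ℂ)*c^2 + (-13/48:ℂ)*b*a + (1/6:ℂ)*b*c + (2:ℂ)*b^2 + (99/80:ℂ)*τ*a^2 + (-73/40:ℂ)*τ*c*a + (-61/80:ℂ)*τ*c^2 + (53/48:ℂ)*τ*b*a + (-7/16:ℂ)*τ*b*c + (-1:ℂ)*τ*b^2) * h1 + ((43/80:ℂ)*a^2 + (109/240:ℂ)*c*a + (91/60:ℂ)*c^2 + (27/8:ℂ)*b*a + (-1:ℂ)*b^2 + (-7/10:ℂ)*τ*a^2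 + (-53/240:ℂ)*τ*c*a + (-31/80:ℂ)*τ*c^2 + (-9/8:ℂ)*τ*b*a) * h2 + ((-41/240:ℂ)*a^2 + (-403/120:ℂ)*c*a + (-207/80:ℂ)*c^2 + (-17/4:ℂ)*b*a + (-83/240:ℂ)*τ*a^2 + (69/80:ℂ)*τ*c*a + (67/40:ℂ)*τ*c^2 + (15/8:ℂ)*τ*b*a) * h0 + ((-7/10:ℂ)*a^4 + (13/40:ℂ)*c*a^3 + (3/4:ℂ)*c^2*a^2 + (61/80:ℂ)*c^3*a + (-61/80:ℂ)*c^4 + (13/20:ℂ)*b*a^3 + (-61/80:ℂ)*b*c*a^2 + (-33/40:ℂ)*b*c^2*a + (37/80:ℂ)*b*c^3 + (59/80:ℂ)*b^2*a^2 + (-111/80:ℂ)*b^2*c*a + (27/40:ℂ)*b^2*c^2 + (-1/8:ℂ)*b^3*a) * -htau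
  have hc : c ^ 4 = 0 := by
    linear_combination ((-71/40:ℂ)*b^2 + (87/20:ℂ)*a*b + (73/80:ℂ)*a^2 + (-13/48:ℂ)*c*b + (1/6:ℂ)*c*a + (2:ℂ)*c^2 + (99/80:ℂ)*τ*b^2 + (-73/40:ℂ)*τ*a*b + (-61/80:ℂ)*τ*a^2 + (53/48:ℂ)*τ*c*b + (-7/16:ℂ)*τ*c*a + (-1:ℂ)*τ*c^2) * h2 + ((43/80:ℂ)*b^2 + (109/240:ℂ)*a*b + (91/60:ℂ)*a^2 + (27/8:ℂ)*c*b + (-1:ℂ)*c^2 + (-7/10:ℂ)*τ*b^2 + (-53/240:ℂ)*τ*a*b + (-31/80:ℂ)*τ*a^2 + (-9/8:ℂ)*τ*c*b) * h0 + ((-41/240:ℂ)*b^2 + (-403/120:ℂ)*a*b + (-207/80:ℂ)*a^2 + (-17/4:ℂ)*c*b + (-83/240:ℂ)*τ*b^2 + (69/80:ℂ)*τ*a*b + (67/40:ℂ)*τ*a^2 + (15/8:ℂ)*τ*c*b) * h1 + ((-7/10:ℂ)*b^4 + (13/40:ℂ)*a*b^3 + (3/4:ℂ)*a^2*b^2 +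 (61/80:ℂ)*a^3*b + (-61/80:ℂ)*a^4 + (13/20:ℂ)*c*b^3 + (-61/80:ℂ)*c*a*b^2 + (-33/40:ℂ)*c*a^2*b + (37/80:ℂ)*c*a^3 + (59/80:ℂ)*c^2*b^2 + (-111/80:ℂ)*c^2*a*b + (27/40:ℂ)*c^2*a^2 + (-1/8:ℂ)*c^3*b) * -htau
  have ha0 : a = 0 := by exact pow_eq_zero_iff (by norm_num) |>.mp ha
  have hb0 : b = 0 := by exact pow_eq_zero_iff (by norm_num) |>.mp hb
  have hc0 : c = 0 := by exact pow_eq_zero_iff (by norm_num) |>.mp hc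
  simp [ha0, hb0, hc0]
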